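/- Let θ be a collineation of a finite thick generalised quadrangle with parameters (s,t) having no fixed points and no fixed lines, which is domestic and maps at least one point and one line to opposites. Then (s+t) divides (st+1); in particular gcd(s,t) = 1 and |P₄| = (s²−1)(st+1)/(s+t). -/

import Mathlib

open SimpleGraph

/-- The incidence graph of a point-line geometry, on vertex set `P ⊕ L`. -/
def incGraph {P L : Type*} (inc : P → L → Prop) : SimpleGraph (P ⊕ L) where
  Adj x y := (∃ p l, x = Sum.inl p ∧ y = Sum.inr l ∧ inc p l) ∨
             (∃ p l, x = Sum.inr l ∧ y = Sum.inl p ∧ inc p l)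
  symm := by
    constructor
    rintro x y (⟨p, l, rfl, rfl, h⟩ | ⟨p, l, rfl, rfl, h⟩)
    · exact Or.inr ⟨p, l, rfl, rfl, h⟩
    · exact Or.inl ⟨p, l, rfl, rfl, h⟩
  loopless := by
    constructor
    rintro x (⟨p, l, rfl, h, _⟩ | ⟨p, l, rfl, h, _⟩) <;> exact nomatch h

/-- A (weak) generalised `n`-gon: the incidence graph is connected, has diameter `n` and
girth `2n`. -/
structure IsGenPolygon {P L : Type*} (n : ℕ) (inc : P → L → Prop) : Prop where
  connected : (incGraph inc).Connected
  dist_le : ∀ x y : P ⊕ L, (incGraph inc).dist x y ≤ n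
  exists_dist_eq : ∃ x y : P ⊕ L, (incGraph inc).dist x y = n
  girth_eq : (incGraph inc).girth = (2 * n : ℕ)

/-- Thickness: every point is on at least three lines and every line carries at least three
points. -/
def IsThick {P L : Type*} (inc : P → L → Prop) : Prop :=
  (∀ p : P, ∃ l₁ l₂ l₃ : L, inc p l₁ ∧ inc p l₂ ∧ inc p l₃ ∧ l₁ ≠ l₂ ∧ l₁ ≠ l₃ ∧ l₂ ≠ l₃) ∧
  (∀ l : L, ∃ p₁ p₂ p₃ : P, inc p₁ l ∧ inc p₂ l ∧ inc p₃ l ∧ p₁ ≠ p₂ ∧ p₁ ≠ p₃ ∧ p₂ ≠ p₃)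

/-- The geometry has parameters `(s, t)`: each line carries `s + 1` points and each point is
on `t + 1` lines. -/
def HasParams {P L : Type*} (inc : P → L → Prop) (s t : ℕ) : Prop :=
  (∀ l : L, Nat.card {p : P // inc p l} = s + 1) ∧
  (∀ p : P, Nat.card {l : L // inc p l} = t + 1)

/-- A collineation: a pair of permutations of the points and the lines preserving
incidence. -/
def IsCollineation {P L : Type*} (inc : P → L → Prop) (θP : Equiv.Perm P)
    (θL : Equiv.Perm L) : Prop :=
  ∀ p l, inc p l ↔ inc (θP p) (θL l)

/-- Two chambers `{p, l}` and `{p', l'}` of a generalised `m`-gon are opposite. -/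
def OppChambers {P L : Type*} (inc : P → L → Prop) (m : ℕ)
    (p p' : P) (l l' : L) : Prop :=
  ((incGraph inc).dist (Sum.inl p) (Sum.inl p') = m ∧
    (incGraph inc).dist (Sum.inr l) (Sum.inr l') = m) ∨
  ((incGraph inc).dist (Sum.inl p) (Sum.inr l') = m ∧
    (incGraph inc).dist (Sum.inr l) (Sum.inl p') = m)

/-- A collineation is domestic if it maps no chamber to an opposite chamber. -/
def IsDomesticColl {P L : Type*} (inc : P → L → Prop) (m : ℕ) (θP : Equiv.Perm P)
    (θL : Equiv.Perm L) : Prop :=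
  ¬ ∃ p l, inc p l ∧ OppChambers inc m p (θP p) l (θL l)

/-!
Call a point `p` opposite if `θ p` is not collinear with `p`, and count the flags `(p, l)` with
`p` opposite in two ways: domesticity forces `l` to meet `θ l`, and such a line carries exactly
`s - 1` opposite points (all but `l ∩ θ l` and its preimage), so
`(t + 1)|P₄| = (s - 1)·#{l | l meets θ l}`. The dual count, together with
`|P| = (s + 1)(st + 1)` and `|L| = (t + 1)(st + 1)`, gives `(s + t)|P₄| = (s² - 1)(st + 1)`.
The collinearity graph is strongly regular with eigenvalues `s - 1` and `-(t + 1)`; integrality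
of the multiplicity of `s - 1` is Higman's condition `s + t ∣ st(s + 1)(t + 1)`, and the two
divisibilities combine to `s + t ∣ st + 1`.
-/

lemma Nat.card_subtype_and_ne_add_one {α : Type*} [Finite α] {S : α → Prop} {a : α}
    (ha : S a) : Nat.card {x // S x ∧ x ≠ a} + 1 = Nat.card {x // S x} :=
  Set.ncard_sdiff_singleton_add_one (s := {x | S x}) ha

lemma Nat.card_subtype_and_ne_and_ne_add_two {α : Type*} [Finite α] {S : α → Prop} {a b : α}
    (ha : S a) (hb : S b) (hab : a ≠ b) :
    Nat.card {x // S x ∧ x ≠ a ∧ x ≠ b} + 2 = Nat.card {x // S x} := by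
  have hb' := Nat.card_subtype_and_ne_add_one (S := fun x => S x ∧ x ≠ a) ⟨hb, hab.symm⟩
  simp only [and_assoc] at hb'
  rw [← Nat.card_subtype_and_ne_add_one ha, ← hb']

lemma Nat.card_subtype_add_card_subtype_not {α : Type*} [Finite α] (S : α → Prop) :
    Nat.card {x // S x} + Nat.card {x // ¬ S x} = Nat.card α :=
  Set.ncard_add_ncard_compl {x | S x}

lemma Nat.card_sigma_of_card_eq {ι : Type*} {κ : ι → Type*} [Finite ι] [∀ i, Finite (κ i)]
    {n : ℕ} (h : ∀ i, Nat.card (κ i) = n) : Nat.card (Σ i, κ i) = Nat.card ι * n := by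
  cases nonempty_fintype ι
  simp [Nat.card_sigma, h, Nat.card_eq_fintype_card, mul_comm]

lemma add_dvd_mul_add_one_of_dvd {R : Type*} [CommRing R] {s t : R}
    (h₁ : s + t ∣ s * t * (s + 1) * (t + 1)) (h₂ : s + t ∣ (s ^ 2 - 1) * (s * t + 1)) :
    s + t ∣ s * t + 1 := by
  have h₃ : s + t ∣ s ^ 2 * (s * t + 1) := by
    rw [show s ^ 2 * (s * t + 1) = (s + t) * (s * (s * t + t + 1)) - s * t * (s + 1) * (t + 1)
      by ring]
    exact (dvd_mul_right _ _).sub h₁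
  rw [show s * t + 1 = s ^ 2 * (s * t + 1) - (s ^ 2 - 1) * (s * t + 1) by ring]
  exact h₃.sub h₂

lemma Nat.coprime_of_add_dvd_mul_add_one {s t : ℕ} (h : s + t ∣ s * t + 1) : s.Coprime t := by
  have hg : s.gcd t ∣ s * t + 1 := (Nat.dvd_add (s.gcd_dvd_left t) (s.gcd_dvd_right t)).trans h
  exact Nat.dvd_one.mp ((Nat.dvd_add_right (dvd_mul_of_dvd_left (s.gcd_dvd_left t) t)).mp hg)

lemma Matrix.exists_trace_eq_natCast_of_isIdempotentElem {ι K : Type*} [Fintype ι]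
    [DecidableEq ι] [Field K] {M : Matrix ι ι K} (hM : IsIdempotentElem M) :
    ∃ N : ℕ, M.trace = N := by
  have he : IsIdempotentElem (Matrix.toLin' M) := hM.map Matrix.toLinAlgEquiv'
  exact ⟨_, (M.trace_toLin'_eq).symm.trans (LinearMap.IsIdempotentElem.isProj_range _ he).trace⟩

section StronglyRegular

open Matrix

variable {V : Type*} [Fintype V] {G : SimpleGraph V} [DecidableRel G.Adj]

lemma SimpleGraph.IsRegularOfDegree.adjMatrix_mul_of_one {α : Type*} [NonAssocSemiring α]
    {k : ℕ} (h : G.IsRegularOfDegree k) : G.adjMatrix α * of 1 = (k : α) • of 1 := by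
  ext v w
  simp [mul_apply, ← neighborFinset_eq_filter, h v]

lemma SimpleGraph.IsRegularOfDegree.of_one_mul_adjMatrix {α : Type*} [NonAssocSemiring α]
    {k : ℕ} (h : G.IsRegularOfDegree k) : of 1 * G.adjMatrix α = (k : α) • of 1 := by
  ext v w
  simp [mul_apply, G.adj_comm _ w, ← neighborFinset_eq_filter, h w]

variable [DecidableEq V] {n k ℓ μ : ℕ}

lemma SimpleGraph.IsSRGWith.adjMatrix_mul_self {α : Type*} [Ring α] (h : G.IsSRGWith n k ℓ μ) :
    G.adjMatrix α * G.adjMatrix α =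
      (k : α) • 1 + (ℓ : α) • G.adjMatrix α + (μ : α) • (of 1 - 1 - G.adjMatrix α) := by
  have hcompl : Gᶜ.adjMatrix α = of 1 - 1 - G.adjMatrix α := by
    ext i j
    by_cases hij : i = j <;> simp [hij, one_apply]
    split_ifs <;> simp
  rw [← sq, ← hcompl]
  simpa only [Nat.cast_smul_eq_nsmul] using h.matrix_eq (α := α)

/-- This is the projection onto the `r`-eigenspace of the adjacency matrix. -/
lemma SimpleGraph.IsSRGWith.isIdempotentElem_smul [Nonempty V] (h : G.IsSRGWith n k ℓ μ)
    {r q : ℚ} (hrq : r ≠ q) (hsum : r + q = ℓ - μ) (hprod : r * q = μ - k) :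
    IsIdempotentElem ((n * (r - q))⁻¹ • ((n : ℚ) • (G.adjMatrix ℚ - q • 1) - (k - q) • of 1)) := by
  set A := G.adjMatrix ℚ
  set J : Matrix V V ℚ := of 1
  set B := A - q • (1 : Matrix V V ℚ)
  have hBB : B * B = (μ : ℚ) • J + (r - q) • B := by
    simp only [B, sub_mul, mul_sub, smul_mul_assoc, mul_smul_comm, one_mul, mul_one]
    linear_combination (norm := module)
      h.adjMatrix_mul_self (α := ℚ) - hsum • A + hprod • (1 : Matrix V V ℚ)
  have hBJ : B * J = ((k : ℚ) - q) • J := by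
    rw [sub_mul, h.regular.adjMatrix_mul_of_one, smul_mul_assoc, one_mul, sub_smul]
  have hJB : J * B = ((k : ℚ) - q) • J := by
    rw [mul_sub, h.regular.of_one_mul_adjMatrix, mul_smul_comm, mul_one, sub_smul]
  have hJJ : J * J = (n : ℚ) • J := by
    ext v w
    simp [J, mul_apply, h.card]
  -- the parameter identity `nμ = (k - r)(k - q)`, read off from `B (B J) = (B B) J`
  have hparam : ((k : ℚ) - q) ^ 2 = n * μ + (r - q) * (k - q) := by
    have e : (((k : ℚ) - q) ^ 2) • J = ((n : ℚ) * μ + (r - q) * (k - q)) • J := by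
      calc _ = B * (B * J) := by rw [hBJ, mul_smul_comm, hBJ, smul_smul, sq]
        _ = (B * B) * J := (mul_assoc ..).symm
        _ = _ := by
          rw [hBB, add_mul, smul_mul_assoc, smul_mul_assoc, hJJ, hBJ, smul_smul, smul_smul,
            ← add_smul, mul_comm (μ : ℚ)]
    obtain ⟨v⟩ := ‹Nonempty V›
    simpa [J] using congrFun (congrFun e v) v
  have hMM : ((n : ℚ) • B - ((k : ℚ) - q) • J) * ((n : ℚ) • B - ((k : ℚ) - q) • J) =
      ((n : ℚ) * (r - q)) • ((n : ℚ) • B - ((k : ℚ) - q) • J) := by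
    simp only [sub_mul, mul_sub, smul_mul_assoc, mul_smul_comm, hBB, hBJ, hJB, hJJ]
    linear_combination (norm := module) (-(n : ℚ)) • hparam • J
  have hn : (n : ℚ) ≠ 0 := by
    rw [← h.card]
    exact_mod_cast Fintype.card_ne_zero
  rw [IsIdempotentElem, smul_mul_smul, hMM, smul_smul]
  congr 1
  field_simp [sub_ne_zero.mpr hrq]

theorem SimpleGraph.IsSRGWith.sub_dvd_add_mul [Nonempty V] (h : G.IsSRGWith n k ℓ μ) {r q : ℤ}
    (hrq : r ≠ q) (hsum : r + q = ℓ - μ) (hprod : r * q = μ - k) : r - q ∣ k + q * (n - 1) := by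
  have hidem := h.isIdempotentElem_smul (r := r) (q := q) (by exact_mod_cast hrq)
    (by exact_mod_cast hsum) (by exact_mod_cast hprod)
  obtain ⟨N, hN⟩ := exists_trace_eq_natCast_of_isIdempotentElem hidem
  have hn : (n : ℚ) ≠ 0 := by
    rw [← h.card]
    exact_mod_cast Fintype.card_ne_zero
  have hc : (n : ℚ) * (r - q) ≠ 0 := mul_ne_zero hn (sub_ne_zero.mpr (by exact_mod_cast hrq))
  have htrJ : (of 1 : Matrix V V ℚ).trace = n := by simp [trace, h.card]
  rw [trace_smul, trace_sub, trace_smul, trace_smul, trace_sub, trace_smul, trace_adjMatrix,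
    trace_one, h.card, htrJ, smul_eq_mul, inv_mul_eq_iff_eq_mul₀ hc] at hN
  refine ⟨-N, ?_⟩
  have : ((k + q * (n - 1) : ℤ) : ℚ) = ((r - q) * -N : ℤ) := by
    push_cast
    apply mul_left_cancel₀ hn
    linear_combination -hN
  exact_mod_cast this

end StronglyRegular

lemma SimpleGraph.Hom.edist_le {V W : Type*} {G : SimpleGraph V} {G' : SimpleGraph W}
    (f : G →g G') (u v : V) : G'.edist (f u) (f v) ≤ G.edist u v := by
  by_cases h : G.Reachable u v
  · obtain ⟨w, hw⟩ := h.exists_walk_length_eq_edist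
    rw [← hw]
    simpa using SimpleGraph.edist_le (w.map f)
  · rw [edist_eq_top_of_not_reachable h]
    exact le_top

lemma SimpleGraph.Iso.dist_eq {V W : Type*} {G : SimpleGraph V} {G' : SimpleGraph W}
    (e : G ≃g G') (u v : V) : G'.dist (e u) (e v) = G.dist u v := by
  suffices G'.edist (e u) (e v) = G.edist u v by simp [SimpleGraph.dist, this]
  refine le_antisymm (e.toHom.edist_le u v) ?_
  simpa using e.symm.toHom.edist_le (e u) (e v)

section IncidenceGraph

variable {P L : Type*} {inc : P → L → Prop}

/-- For lines, `AreCollinear (flip inc) l m` says that `l` and `m` meet. -/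
def AreCollinear (inc : P → L → Prop) (p q : P) : Prop :=
  ∃ l, inc p l ∧ inc q l

lemma AreCollinear.symm {p q : P} (h : AreCollinear inc p q) : AreCollinear inc q p :=
  let ⟨l, hp, hq⟩ := h; ⟨l, hq, hp⟩

@[simp]
lemma incGraph_adj_inl_inr {p : P} {l : L} :
    (incGraph inc).Adj (.inl p) (.inr l) ↔ inc p l := by
  simp [incGraph]

@[simp]
lemma incGraph_adj_inr_inl {p : P} {l : L} :
    (incGraph inc).Adj (.inr l) (.inl p) ↔ inc p l := by
  simp [incGraph]

@[simp]
lemma incGraph_not_adj_inl_inl {p q : P} : ¬ (incGraph inc).Adj (.inl p) (.inl q) := by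
  simp [incGraph]

@[simp]
lemma incGraph_not_adj_inr_inr {l m : L} : ¬ (incGraph inc).Adj (.inr l) (.inr m) := by
  simp [incGraph]

def incGraphColoring : (incGraph inc).Coloring Bool :=
  Coloring.mk Sum.isLeft <| by
    rintro (p | l) (q | m) h <;> simp_all

lemma even_dist_incGraph_iff (hconn : (incGraph inc).Connected) (x y : P ⊕ L) :
    Even ((incGraph inc).dist x y) ↔ (x.isLeft ↔ y.isLeft) := by
  obtain ⟨w, hw⟩ := hconn.exists_walk_length_eq_dist x y
  rw [← hw]
  exact incGraphColoring.even_length_iff_congr w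

def incGraphFlipIso (inc : P → L → Prop) : incGraph (flip inc) ≃g incGraph inc where
  toEquiv := Equiv.sumComm L P
  map_rel_iff' := by rintro (l | p) (m | q) <;> simp [flip]

lemma incGraph_dist_inr_inr (l m : L) :
    (incGraph inc).dist (.inr l) (.inr m) = (incGraph (flip inc)).dist (.inl l) (.inl m) :=
  (incGraphFlipIso inc).dist_eq (.inl l) (.inl m)

end IncidenceGraph

namespace IsGenPolygon

variable {P L : Type*} {inc : P → L → Prop}

lemma dual {n : ℕ} (h : IsGenPolygon n inc) : IsGenPolygon n (flip inc) where
  connected := (incGraphFlipIso inc).connected_iff.mpr h.connected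
  dist_le x y := by
    rw [← (incGraphFlipIso inc).dist_eq]
    exact h.dist_le _ _
  exists_dist_eq := by
    obtain ⟨x, y, hxy⟩ := h.exists_dist_eq
    refine ⟨(incGraphFlipIso inc).symm x, (incGraphFlipIso inc).symm y, ?_⟩
    rwa [← (incGraphFlipIso inc).dist_eq, RelIso.apply_symm_apply, RelIso.apply_symm_apply]
  girth_eq := (incGraphFlipIso inc).girth_eq.trans h.girth_eq

variable (h : IsGenPolygon 4 inc)
include h

lemma dist_inl_inl_le_two_iff {p q : P} :
    (incGraph inc).dist (.inl p) (.inl q) ≤ 2 ↔ p = q ∨ AreCollinear inc p q := by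
  constructor
  · intro hle
    obtain ⟨w, hw⟩ := h.connected.exists_walk_length_eq_dist (.inl p) (.inl q)
    have heven := (even_dist_incGraph_iff h.connected (.inl p) (.inl q)).mpr (by simp)
    have h02 : w.length = 0 ∨ w.length = 2 := by obtain ⟨k, hk⟩ := heven; omega
    rcases h02 with h0 | h2
    · exact .inl (Sum.inl_injective (w.eq_of_length_eq_zero h0))
    · have a0 := w.adj_getVert_succ (i := 0) (by omega)
      have a1 := w.adj_getVert_succ (i := 1) (by omega)
      rw [Walk.getVert_zero] at a0
      rw [show 1 + 1 = w.length by omega, Walk.getVert_length] at a1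
      generalize w.getVert (0 + 1) = x at a0 a1
      rcases x with _ | l
      · simp at a0
      · exact .inr ⟨l, by simpa using a0, by simpa using a1⟩
  · rintro (rfl | ⟨l, hpl, hql⟩)
    · simp
    · simpa using SimpleGraph.dist_le (.cons (incGraph_adj_inl_inr.mpr hpl)
        (.cons (incGraph_adj_inr_inl.mpr hql) .nil))

lemma dist_inl_inl_eq_four_iff {p q : P} :
    (incGraph inc).dist (.inl p) (.inl q) = 4 ↔ p ≠ q ∧ ¬ AreCollinear inc p q := by
  rw [← not_or, ← h.dist_inl_inl_le_two_iff]
  have hle := h.dist_le (.inl p) (.inl q)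
  obtain ⟨k, hk⟩ := (even_dist_incGraph_iff h.connected (.inl p) (.inl q)).mpr (by simp)
  omega

lemma exists_inc_collinear {p : P} {l : L} (hpl : ¬ inc p l) :
    ∃ q, inc q l ∧ AreCollinear inc p q := by
  obtain ⟨w, hw⟩ := h.connected.exists_walk_length_eq_dist (.inl p) (.inr l)
  have hodd : ¬ Even w.length := by
    rw [hw, even_dist_incGraph_iff h.connected]
    simp
  have hne1 : w.length ≠ 1 := by
    rw [hw, Ne, dist_eq_one_iff_adj, incGraph_adj_inl_inr]
    exact hpl
  have h3 : w.length = 3 := by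
    have := h.dist_le (.inl p) (.inr l)
    obtain ⟨k, hk⟩ := Nat.not_even_iff_odd.mp hodd
    omega
  have a0 := w.adj_getVert_succ (i := 0) (by omega)
  have a1 := w.adj_getVert_succ (i := 1) (by omega)
  have a2 := w.adj_getVert_succ (i := 2) (by omega)
  rw [Walk.getVert_zero] at a0
  rw [show 2 + 1 = w.length by omega, Walk.getVert_length] at a2
  generalize w.getVert (0 + 1) = x at a0 a1
  generalize w.getVert (1 + 1) = y at a1 a2
  rcases x with _ | m <;> rcases y with q | _ <;> simp at a0 a1 a2
  exact ⟨q, a2, m, a0, a1⟩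

lemma eight_le_length_of_isCycle {x : P ⊕ L} {w : (incGraph inc).Walk x x}
    (hw : w.IsCycle) : 8 ≤ w.length := by
  simpa [h.girth_eq] using girth_le_length hw

lemma eq_of_inc_of_inc {p q : P} {l m : L} (hpq : p ≠ q) (hpl : inc p l) (hql : inc q l)
    (hpm : inc p m) (hqm : inc q m) : l = m := by
  by_contra hlm
  have hcycle : (Walk.cons (incGraph_adj_inl_inr.mpr hpl) <|
      .cons (incGraph_adj_inr_inl.mpr hql) <| .cons (incGraph_adj_inl_inr.mpr hqm) <|
      .cons (incGraph_adj_inr_inl.mpr hpm) .nil).IsCycle := by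
    simp [Walk.cons_isCycle_iff, hpq, hlm, Ne.symm hpq]
  simpa using h.eight_le_length_of_isCycle hcycle

lemma eq_of_inc_of_collinear {p q q' : P} {l : L} (hpl : ¬ inc p l) (hql : inc q l)
    (hpq : AreCollinear inc p q) (hq'l : inc q' l) (hpq' : AreCollinear inc p q') : q = q' := by
  obtain ⟨m, hpm, hqm⟩ := hpq
  obtain ⟨m', hpm', hq'm'⟩ := hpq'
  by_contra hqq'
  have hml : m ≠ l := by rintro rfl; exact hpl hpm
  have hm'l : m' ≠ l := by rintro rfl; exact hpl hpm'
  have hmm' : m ≠ m' := by rintro rfl; exact hml (h.eq_of_inc_of_inc hqq' hqm hq'm' hql hq'l)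
  have hpq : p ≠ q := by rintro rfl; exact hpl hql
  have hpq' : p ≠ q' := by rintro rfl; exact hpl hq'l
  have hcycle : (Walk.cons (incGraph_adj_inl_inr.mpr hpm) <|
      .cons (incGraph_adj_inr_inl.mpr hqm) <| .cons (incGraph_adj_inl_inr.mpr hql) <|
      .cons (incGraph_adj_inr_inl.mpr hq'l) <| .cons (incGraph_adj_inl_inr.mpr hq'm') <|
      .cons (incGraph_adj_inr_inl.mpr hpm') .nil).IsCycle := by
    simp [Walk.cons_isCycle_iff, hpq, hpq', hqq', hml, hmm', Ne.symm hpq, Ne.symm hpq',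
      Ne.symm hm'l]
  simpa using h.eight_le_length_of_isCycle hcycle

end IsGenPolygon

structure IsGenQuadrangle {P L : Type*} (inc : P → L → Prop) (s t : ℕ) : Prop where
  hasParams : HasParams inc s t
  eq_of_inc_of_inc : ∀ {p q : P} {l m : L}, p ≠ q → inc p l → inc q l → inc p m → inc q m → l = m
  existsUnique_inc_collinear : ∀ {p : P} {l : L}, ¬ inc p l → ∃! q, inc q l ∧ AreCollinear inc p q

lemma IsGenPolygon.isGenQuadrangle {P L : Type*} {inc : P → L → Prop} {s t : ℕ}
    (h : IsGenPolygon 4 inc) (hparams : HasParams inc s t) : IsGenQuadrangle inc s t where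
  hasParams := hparams
  eq_of_inc_of_inc := h.eq_of_inc_of_inc
  existsUnique_inc_collinear hpl := by
    obtain ⟨q, hq⟩ := h.exists_inc_collinear hpl
    exact ⟨q, hq, fun q' hq' => h.eq_of_inc_of_collinear hpl hq'.1 hq'.2 hq.1 hq.2⟩

def collinearityGraph {P L : Type*} (inc : P → L → Prop) : SimpleGraph P where
  Adj p q := p ≠ q ∧ AreCollinear inc p q
  symm := ⟨fun _ _ ⟨hne, hpq⟩ => ⟨hne.symm, hpq.symm⟩⟩
  loopless := ⟨fun _ h => h.1 rfl⟩

@[simp]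
lemma collinearityGraph_adj {P L : Type*} {inc : P → L → Prop} {p q : P} :
    (collinearityGraph inc).Adj p q ↔ p ≠ q ∧ AreCollinear inc p q :=
  Iff.rfl

namespace IsGenQuadrangle

variable {P L : Type*} {inc : P → L → Prop} {s t : ℕ} (h : IsGenQuadrangle inc s t)
include h

lemma dual : IsGenQuadrangle (flip inc) t s where
  hasParams := ⟨h.hasParams.2, h.hasParams.1⟩
  eq_of_inc_of_inc hlm hpl hpm hql hqm := by
    by_contra hpq
    exact hlm (h.eq_of_inc_of_inc hpq hpl hql hpm hqm)
  existsUnique_inc_collinear {l p} hpl := by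
    obtain ⟨q, ⟨hql, m, hpm, hqm⟩, huniq⟩ := h.existsUnique_inc_collinear hpl
    refine ⟨m, ⟨hpm, q, hql, hqm⟩, ?_⟩
    rintro m' ⟨hpm', x, hxl, hxm'⟩
    obtain rfl : x = q := huniq x ⟨hxl, m', hpm', hxm'⟩
    exact h.eq_of_inc_of_inc (by rintro rfl; exact hpl hxl) hpm' hxm' hpm hqm

lemma exists_inc (p : P) : ∃ l, inc p l := by
  have : 0 < Nat.card {l // inc p l} := by rw [h.hasParams.2 p]; omega
  obtain ⟨⟨l, hl⟩⟩ := (Nat.card_pos_iff.mp this).1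
  exact ⟨l, hl⟩

lemma card_inc_and_ne [Finite P] {l : L} {x : P} (hxl : inc x l) :
    Nat.card {y // inc y l ∧ y ≠ x} = s := by
  have := Nat.card_subtype_and_ne_add_one (S := (inc · l)) hxl
  rw [h.hasParams.1 l] at this
  omega

lemma card_neighborSet [Finite P] [Finite L] (x : P) :
    Nat.card ((collinearityGraph inc).neighborSet x) = s * (t + 1) := by
  let F : (Σ l : {l // inc x l}, {y // inc y l ∧ y ≠ x}) →
      (collinearityGraph inc).neighborSet x :=
    fun ⟨l, y⟩ => ⟨y, collinearityGraph_adj.mpr ⟨y.2.2.symm, l, l.2, y.2.1⟩⟩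
  have hF : F.Bijective := by
    constructor
    · rintro ⟨⟨l, hxl⟩, ⟨y, hyl, hyx⟩⟩ ⟨⟨l', hxl'⟩, ⟨y', hyl', hyx'⟩⟩ hFF
      obtain rfl : y = y' := congrArg Subtype.val hFF
      obtain rfl : l = l' := h.eq_of_inc_of_inc hyx.symm hxl hyl hxl' hyl'
      rfl
    · rintro ⟨y, hxy⟩
      obtain ⟨hxy, l, hxl, hyl⟩ := collinearityGraph_adj.mp hxy
      exact ⟨⟨⟨l, hxl⟩, ⟨y, hyl, Ne.symm hxy⟩⟩, rfl⟩
  rw [← Nat.card_eq_of_bijective F hF, Nat.card_sigma_of_card_eq fun l => h.card_inc_and_ne l.2,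
    h.hasParams.2 x, mul_comm]

/-- Every point `y` off a line `l₀` is determined by its projection `z` onto `l₀` and the line
joining `y` and `z`. -/
lemma card_eq [Finite P] [Finite L] [Nonempty P] : Nat.card P = (s + 1) * (s * t + 1) := by
  obtain ⟨l₀, -⟩ := h.exists_inc (Classical.arbitrary P)
  let F : (Σ z : {z // inc z l₀}, Σ m : {m // inc z.1 m ∧ m ≠ l₀}, {y // inc y m.1 ∧ y ≠ z.1}) →
      {y // ¬ inc y l₀} :=
    fun ⟨z, m, y⟩ => ⟨y, fun hyl₀ => m.2.2 (h.eq_of_inc_of_inc y.2.2 y.2.1 m.2.1 hyl₀ z.2)⟩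
  have hF : F.Bijective := by
    constructor
    · rintro ⟨⟨z, hz⟩, ⟨m, hzm, hm⟩, ⟨y, hym, hyz⟩⟩ ⟨⟨z', hz'⟩, ⟨m', hzm', hm'⟩, ⟨y', hym', hyz'⟩⟩
        hFF
      obtain rfl : y = y' := congrArg Subtype.val hFF
      have hyl₀ : ¬ inc y l₀ := (F ⟨⟨z, hz⟩, ⟨m, hzm, hm⟩, ⟨y, hym, hyz⟩⟩).2
      obtain rfl : z = z' :=
        (h.existsUnique_inc_collinear hyl₀).unique ⟨hz, m, hym, hzm⟩ ⟨hz', m', hym', hzm'⟩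
      obtain rfl : m = m' := h.eq_of_inc_of_inc hyz hym hzm hym' hzm'
      rfl
    · rintro ⟨y, hyl₀⟩
      obtain ⟨z, hz, m, hym, hzm⟩ := (h.existsUnique_inc_collinear hyl₀).exists
      refine ⟨⟨⟨z, hz⟩, ⟨m, hzm, ?_⟩, ⟨y, hym, ?_⟩⟩, rfl⟩
      · rintro rfl; exact hyl₀ hym
      · rintro rfl; exact hyl₀ hz
  have hfiber (z : {z // inc z l₀}) :
      Nat.card (Σ m : {m // inc z.1 m ∧ m ≠ l₀}, {y // inc y m.1 ∧ y ≠ z.1}) = t * s := by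
    have hlines : Nat.card {m // inc z.1 m ∧ m ≠ l₀} = t := h.dual.card_inc_and_ne z.2
    rw [Nat.card_sigma_of_card_eq fun m => h.card_inc_and_ne m.2.1, hlines]
  rw [← Nat.card_subtype_add_card_subtype_not (inc · l₀), ← Nat.card_eq_of_bijective F hF,
    Nat.card_sigma_of_card_eq hfiber, h.hasParams.1 l₀]
  ring

lemma card_commonNeighbors_of_adj [Finite P] {p q : P} (hpq : (collinearityGraph inc).Adj p q) :
    Nat.card ((collinearityGraph inc).commonNeighbors p q) = s - 1 := by
  obtain ⟨hne, n, hpn, hqn⟩ := hpq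
  have e : (collinearityGraph inc).commonNeighbors p q ≃ {z // inc z n ∧ z ≠ p ∧ z ≠ q} := by
    refine Equiv.subtypeEquivRight fun z => ?_
    simp only [mem_commonNeighbors, collinearityGraph_adj]
    constructor
    · rintro ⟨⟨hpz, hpz'⟩, hqz, hqz'⟩
      refine ⟨?_, hpz.symm, hqz.symm⟩
      by_contra hzn
      exact hne ((h.existsUnique_inc_collinear hzn).unique ⟨hpn, hpz'.symm⟩ ⟨hqn, hqz'.symm⟩)
    · rintro ⟨hzn, hzp, hzq⟩
      exact ⟨⟨hzp.symm, n, hpn, hzn⟩, hzq.symm, n, hqn, hzn⟩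
  have := Nat.card_subtype_and_ne_and_ne_add_two (S := (inc · n)) hpn hqn hne
  rw [h.hasParams.1 n] at this
  rw [Nat.card_congr e]
  omega

lemma card_commonNeighbors_of_not_adj {p q : P} (hne : p ≠ q)
    (hpq : ¬ (collinearityGraph inc).Adj p q) :
    Nat.card ((collinearityGraph inc).commonNeighbors p q) = t + 1 := by
  have hcol : ¬ AreCollinear inc p q := fun hcol => hpq ⟨hne, hcol⟩
  have hqm (m : {m // inc p m}) : ¬ inc q m := fun hqm => hcol ⟨m, m.2, hqm⟩
  choose f hf huniq using fun m => h.existsUnique_inc_collinear (hqm m)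
  have hpf (m) : p ≠ f m := by rintro hp; exact hcol (hp ▸ (hf m).2.symm)
  let F : {m // inc p m} → (collinearityGraph inc).commonNeighbors p q := fun m =>
    ⟨f m, (collinearityGraph inc).mem_commonNeighbors.mpr ⟨⟨hpf m, m, m.2, (hf m).1⟩,
      ⟨fun hq => hqm m (hq ▸ (hf m).1), (hf m).2⟩⟩⟩
  have hF : F.Bijective := by
    constructor
    · intro m m' hFF
      have hff : f m = f m' := congrArg Subtype.val hFF
      exact Subtype.ext (h.eq_of_inc_of_inc (hpf m) m.2 (hf m).1 m'.2 (hff ▸ (hf m').1))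
    · rintro ⟨z, hz⟩
      obtain ⟨⟨-, A, hpA, hzA⟩, -, hqz⟩ := (collinearityGraph inc).mem_commonNeighbors.mp hz
      exact ⟨⟨A, hpA⟩, Subtype.ext (huniq ⟨A, hpA⟩ z ⟨hzA, hqz⟩).symm⟩
  rw [← Nat.card_eq_of_bijective F hF, h.hasParams.2 p]

lemma isSRGWith [Fintype P] [Finite L] [DecidableRel (collinearityGraph inc).Adj] [Nonempty P] :
    (collinearityGraph inc).IsSRGWith ((s + 1) * (s * t + 1)) (s * (t + 1)) (s - 1) (t + 1) where
  card := by rw [← Nat.card_eq_fintype_card, h.card_eq]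
  regular x := by
    rw [← card_neighborSet_eq_degree, ← Nat.card_eq_fintype_card, h.card_neighborSet]
  of_adj p q hpq := by rw [← Nat.card_eq_fintype_card, h.card_commonNeighbors_of_adj hpq]
  of_not_adj p q hne hpq := by
    rw [← Nat.card_eq_fintype_card, h.card_commonNeighbors_of_not_adj hne hpq]

/-- Higman's divisibility: `st(s + 1)(t + 1)/(s + t)` is the multiplicity of the eigenvalue
`s - 1` of the collinearity graph. -/
theorem add_dvd_mul [Finite P] [Finite L] [Nonempty P] (hs : 1 ≤ s) :
    (s + t : ℤ) ∣ s * t * (s + 1) * (t + 1) := by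
  classical
  cases nonempty_fintype P
  have hdvd := h.isSRGWith.sub_dvd_add_mul (r := s - 1) (q := -(t + 1)) (by omega)
    (by push_cast [hs]; ring) (by push_cast [hs]; ring)
  have hr : ((s : ℤ) - 1) - -(t + 1) = s + t := by ring
  have hk : ((s * (t + 1) : ℕ) : ℤ) + -(t + 1) * (((s + 1) * (s * t + 1) : ℕ) - 1) =
      -(s * t * (s + 1) * (t + 1)) := by
    push_cast
    ring
  rwa [hr, hk, dvd_neg] at hdvd

variable {θP : Equiv.Perm P} {θL : Equiv.Perm L}

lemma card_inc_not_collinear_image [Finite P] (hcoll : IsCollineation inc θP θL)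
    (hθP : ∀ p, θP p ≠ p) (hθL : ∀ l, θL l ≠ l) {l : L}
    (hl : AreCollinear (flip inc) l (θL l)) :
    Nat.card {p // inc p l ∧ ¬ AreCollinear inc p (θP p)} = s - 1 := by
  obtain ⟨x, hxl, hxθl⟩ := hl
  set x' := θP.symm x
  have hθx' : θP x' = x := θP.apply_symm_apply x
  have hx'l : inc x' l := (hcoll x' l).mpr (hθx' ▸ hxθl)
  have hxx' : x ≠ x' := fun hx => hθP x' (hθx'.trans hx)
  have e : {p // inc p l ∧ ¬ AreCollinear inc p (θP p)} ≃ {p // inc p l ∧ p ≠ x ∧ p ≠ x'} := by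
    refine Equiv.subtypeEquivRight fun p => and_congr_right fun hpl => ?_
    constructor
    · intro hp
      refine ⟨?_, ?_⟩
      · rintro rfl; exact hp ⟨θL l, hxθl, (hcoll p l).mp hpl⟩
      · rintro rfl; exact hp ⟨l, hx'l, hθx' ▸ hxl⟩
    · rintro ⟨hpx, hpx'⟩ hp
      have hpθl : ¬ inc p (θL l) := fun hpθl =>
        hpx (h.dual.eq_of_inc_of_inc (hθL l).symm hpl hpθl hxl hxθl)
      have hθp : θP p = x := (h.existsUnique_inc_collinear hpθl).unique
        ⟨(hcoll p l).mp hpl, hp⟩ ⟨hxθl, l, hpl, hxl⟩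
      exact hpx' (θP.eq_symm_apply.mpr hθp)
  have := Nat.card_subtype_and_ne_and_ne_add_two (S := (inc · l)) hxl hx'l hxx'
  rw [h.hasParams.1 l] at this
  rw [Nat.card_congr e]
  omega

lemma card_not_collinear_image_mul [Finite P] [Finite L] (hcoll : IsCollineation inc θP θL)
    (hθP : ∀ p, θP p ≠ p) (hθL : ∀ l, θL l ≠ l)
    (hdom : ∀ p l, inc p l → AreCollinear inc p (θP p) ∨ AreCollinear (flip inc) l (θL l)) :
    Nat.card {p // ¬ AreCollinear inc p (θP p)} * (t + 1) =
      Nat.card {l // AreCollinear (flip inc) l (θL l)} * (s - 1) := by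
  let Flags := {x : P × L // inc x.1 x.2 ∧ ¬ AreCollinear inc x.1 (θP x.1)}
  let byPoint : Flags ≃ Σ p : {p // ¬ AreCollinear inc p (θP p)}, {l // inc p.1 l} :=
    { toFun := fun x => ⟨⟨x.1.1, x.2.2⟩, ⟨x.1.2, x.2.1⟩⟩
      invFun := fun y => ⟨(y.1.1, y.2.1), y.2.2, y.1.2⟩
      left_inv := fun _ => rfl
      right_inv := fun _ => rfl }
  let byLine : Flags ≃ Σ l : {l // AreCollinear (flip inc) l (θL l)},
      {p // inc p l.1 ∧ ¬ AreCollinear inc p (θP p)} :=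
    { toFun := fun x => ⟨⟨x.1.2, (hdom _ _ x.2.1).resolve_left x.2.2⟩, ⟨x.1.1, x.2⟩⟩
      invFun := fun y => ⟨(y.2.1, y.1.1), y.2.2⟩
      left_inv := fun _ => rfl
      right_inv := fun _ => rfl }
  rw [← Nat.card_sigma_of_card_eq fun p => h.hasParams.2 p.1, ← Nat.card_congr byPoint,
    Nat.card_congr byLine,
    Nat.card_sigma_of_card_eq fun l => h.card_inc_not_collinear_image hcoll hθP hθL l.2]

theorem add_mul_card_not_collinear_image [Finite P] [Finite L] [Nonempty P] (hs : 1 ≤ s)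
    (ht : 1 ≤ t) (hcoll : IsCollineation inc θP θL) (hθP : ∀ p, θP p ≠ p) (hθL : ∀ l, θL l ≠ l)
    (hdom : ∀ p l, inc p l → AreCollinear inc p (θP p) ∨ AreCollinear (flip inc) l (θL l)) :
    ((s : ℤ) + t) * Nat.card {p // ¬ AreCollinear inc p (θP p)} =
      ((s : ℤ) ^ 2 - 1) * (s * t + 1) := by
  have : Nonempty L := ⟨(h.exists_inc (Classical.arbitrary P)).choose⟩
  have hpoints := h.card_not_collinear_image_mul hcoll hθP hθL hdom
  have hlines : Nat.card {l // ¬ AreCollinear (flip inc) l (θL l)} * (s + 1) =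
      Nat.card {p // AreCollinear inc p (θP p)} * (t - 1) :=
    h.dual.card_not_collinear_image_mul (fun l p => hcoll p l) hθL hθP
      fun l p hpl => (hdom p l hpl).symm
  have hP := Nat.card_subtype_add_card_subtype_not fun p => AreCollinear inc p (θP p)
  have hL := Nat.card_subtype_add_card_subtype_not fun l => AreCollinear (flip inc) l (θL l)
  rw [h.card_eq] at hP
  rw [h.dual.card_eq] at hL
  zify [hs, ht] at hpoints hlines hP hL
  refine mul_left_cancel₀ (two_ne_zero (α := ℤ)) ?_
  linear_combination (s + 1 : ℤ) * hpoints - (s - 1 : ℤ) * hlines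
    - ((s : ℤ) - 1) * (t - 1) * hP + ((s : ℤ) - 1) * (s + 1) * hL

end IsGenQuadrangle

lemma IsDomesticColl.collinear_or_collinear {P L : Type*} {inc : P → L → Prop}
    {θP : Equiv.Perm P} {θL : Equiv.Perm L} (hdom : IsDomesticColl inc 4 θP θL)
    (hpoly : IsGenPolygon 4 inc) (hθP : ∀ p, θP p ≠ p) (hθL : ∀ l, θL l ≠ l) {p : P} {l : L}
    (hpl : inc p l) : AreCollinear inc p (θP p) ∨ AreCollinear (flip inc) l (θL l) := by
  by_contra! hopp
  refine hdom ⟨p, l, hpl, .inl ⟨?_, ?_⟩⟩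
  · exact hpoly.dist_inl_inl_eq_four_iff.mpr ⟨(hθP p).symm, hopp.1⟩
  · rw [incGraph_dist_inr_inr]
    exact hpoly.dual.dist_inl_inl_eq_four_iff.mpr ⟨(hθL l).symm, hopp.2⟩

theorem quadrangle_exceptional_domestic_no_fixed_general {P L : Type*} [Finite P] [Finite L]
    (inc : P → L → Prop) (s t : ℕ) (hs : 2 ≤ s) (ht : 2 ≤ t)
    (hpoly : IsGenPolygon 4 inc) (hparams : HasParams inc s t)
    (θP : Equiv.Perm P) (θL : Equiv.Perm L) (hcoll : IsCollineation inc θP θL)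
    (hdom : IsDomesticColl inc 4 θP θL)
    (hnofixP : ∀ p : P, θP p ≠ p) (hnofixL : ∀ l : L, θL l ≠ l) :
    (s + t ∣ s * t + 1) ∧ Nat.Coprime s t ∧
    ((s : ℤ) + t) *
        (Nat.card {p : P // (incGraph inc).dist (Sum.inl p) (Sum.inl (θP p)) = 4}) =
      ((s : ℤ) ^ 2 - 1) * ((s : ℤ) * t + 1) := by
  have hgq := hpoly.isGenQuadrangle hparams
  have : Nonempty P := by
    obtain ⟨p | l⟩ := hpoly.connected.nonempty
    exacts [⟨p⟩, ⟨(hgq.dual.exists_inc l).choose⟩]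
  have hP4 : Nat.card {p // (incGraph inc).dist (.inl p) (.inl (θP p)) = 4} =
      Nat.card {p // ¬ AreCollinear inc p (θP p)} :=
    Nat.card_congr <| Equiv.subtypeEquivRight fun p => by
      rw [hpoly.dist_inl_inl_eq_four_iff, and_iff_right (hnofixP p).symm]
  have hkey := hgq.add_mul_card_not_collinear_image (by omega) (by omega) hcoll hnofixP hnofixL
    fun p l => hdom.collinear_or_collinear hpoly hnofixP hnofixL
  have hdvd : s + t ∣ s * t + 1 := by
    exact_mod_cast add_dvd_mul_add_one_of_dvd (hgq.add_dvd_mul (by omega)) ⟨_, hkey.symm⟩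
  exact ⟨hdvd, Nat.coprime_of_add_dvd_mul_add_one hdvd, hP4 ▸ hkey⟩

/-- A domestic collineation of a finite thick generalised quadrangle with no fixed points
and no fixed lines that maps at least one point and at least one line to opposites
satisfies `(s+t) ∣ (st+1)`; in particular `gcd(s,t) = 1` and
`|P₄| = (s²−1)(st+1)/(s+t)`. -/
theorem quadrangle_exceptional_domestic_no_fixed {P L : Type*} [Finite P] [Finite L]
    (inc : P → L → Prop) (s t : ℕ) (hs : 2 ≤ s) (ht : 2 ≤ t)
    (hpoly : IsGenPolygon 4 inc) (hthick : IsThick inc) (hparams : HasParams inc s t)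
    (θP : Equiv.Perm P) (θL : Equiv.Perm L) (hcoll : IsCollineation inc θP θL)
    (hdom : IsDomesticColl inc 4 θP θL)
    (hexcP : ∃ p : P, (incGraph inc).dist (Sum.inl p) (Sum.inl (θP p)) = 4)
    (hexcL : ∃ l : L, (incGraph inc).dist (Sum.inr l) (Sum.inr (θL l)) = 4)
    (hnofixP : ∀ p : P, θP p ≠ p) (hnofixL : ∀ l : L, θL l ≠ l) :
    (s + t ∣ s * t + 1) ∧ Nat.Coprime s t ∧
    ((s : ℤ) + t) *
        (Nat.card {p : P // (incGraph inc).dist (Sum.inl p) (Sum.inl (θP p)) = 4}) =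
      ((s : ℤ) ^ 2 - 1) * ((s : ℤ) * t + 1) :=
  quadrangle_exceptional_domestic_no_fixed_general inc s t hs ht hpoly hparams θP θL hcoll hdom
    hnofixP hnofixL
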